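/- arXiv:1807.08978 — 2 statements merged into one kernel-verified Lean document; each statement's English description precedes it below -/
import Mathlib

section
/- (Rayleigh and double-Rayleigh PDF) Let γ̄ > 0, 0 < α < 1 and γ > 0. Then ∫₀^∞ (1/((1 - α(1 - x)) γ̄)) e^{-γ/((1 - α(1 - x)) γ̄)} e^{-x} dx = (1/(α γ̄)) e^{(1-α)/α} Γ(0, (1-α)/α, γ/(α γ̄)). -/
open MeasureTheory Real

/-!
The substitution `t = x + (1 - α)/α` turns the mixing variable into the integration variable of
`Γ(0, ·, ·)`: since `1 - α(1 - x) = α t`, the Rayleigh density `1/(α t γ̄) e^{-γ/(α t γ̄)}` becomes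
`t⁻¹ e^{-b/t}` with `b = γ/(α γ̄)` up to the factor `1/(α γ̄)`, and `e^{-x} = e^{(1-α)/α} e^{-t}`.
-/

/-- Generalized incomplete gamma function `Γ(a, x, b) = ∫ₓ^∞ t^{a-1} e^{-t} e^{-b/t} dt`. -/
noncomputable def genGamma (a x b : ℝ) : ℝ :=
  ∫ t in Set.Ioi x, t ^ (a - 1) * Real.exp (-t) * Real.exp (-b / t)

theorem setIntegral_Ioi_comp_add_right {E : Type*} [NormedAddCommGroup E] [NormedSpace ℝ E]
    (g : ℝ → E) (a c : ℝ) :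
    ∫ x in Set.Ioi a, g (x + c) = ∫ t in Set.Ioi (a + c), g t := by
  rw [← (measurePreserving_add_right volume c).setIntegral_preimage_emb
    (measurableEmbedding_addRight c) g (Set.Ioi (a + c)), Set.preimage_add_const_Ioi,
    add_sub_cancel_right]

theorem genGamma_zero (x b : ℝ) :
    genGamma 0 x b = ∫ t in Set.Ioi x, t⁻¹ * Real.exp (-t) * Real.exp (-b / t) := by
  simp only [genGamma, zero_sub, rpow_neg_one]

theorem rayleigh_mixture_integrand_eq {α : ℝ} (hα : α ≠ 0) (γbar γ x : ℝ) :
    (1 / ((1 - α * (1 - x)) * γbar)) *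
        Real.exp (-γ / ((1 - α * (1 - x)) * γbar)) * Real.exp (-x)
      = (1 / (α * γbar)) * Real.exp ((1 - α) / α) *
          ((x + (1 - α) / α)⁻¹ * Real.exp (-(x + (1 - α) / α)) *
            Real.exp (-(γ / (α * γbar)) / (x + (1 - α) / α))) := by
  have hshift : 1 - α * (1 - x) = α * (x + (1 - α) / α) := by field_simp; ring
  have hexp : Real.exp (-x) = Real.exp ((1 - α) / α) * Real.exp (-(x + (1 - α) / α)) := by
    rw [← Real.exp_add]; ring_nf
  rw [hshift, hexp]
  simp only [div_eq_mul_inv, mul_inv]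
  ring_nf

theorem rdr_pdf_general (γbar α γ : ℝ) (hα0 : 0 < α) :
    ∫ x in Set.Ioi (0 : ℝ),
        (1 / ((1 - α * (1 - x)) * γbar)) *
          Real.exp (-γ / ((1 - α * (1 - x)) * γbar)) * Real.exp (-x)
      = (1 / (α * γbar)) * Real.exp ((1 - α) / α) *
          genGamma 0 ((1 - α) / α) (γ / (α * γbar)) := by
  simp_rw [rayleigh_mixture_integrand_eq hα0.ne']
  rw [integral_const_mul, genGamma_zero]
  congr 1
  simpa only [zero_add] using setIntegral_Ioi_comp_add_right
    (fun t => t⁻¹ * Real.exp (-t) * Real.exp (-(γ / (α * γbar)) / t)) 0 ((1 - α) / α)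

/-- **Rayleigh and double-Rayleigh (RDR) PDF.** For `γ̄ > 0`, `0 < α < 1` and `γ > 0`,
`∫₀^∞ (1/((1-α(1-x))γ̄)) e^{-γ/((1-α(1-x))γ̄)} e^{-x} dx
  = (1/(αγ̄)) e^{(1-α)/α} Γ(0, (1-α)/α, γ/(αγ̄))`. -/
theorem rdr_pdf (γbar α γ : ℝ) (hγbar : 0 < γbar) (hα0 : 0 < α) (hα1 : α < 1)
    (hγ : 0 < γ) :
    ∫ x in Set.Ioi (0 : ℝ),
        (1 / ((1 - α * (1 - x)) * γbar)) *
          Real.exp (-γ / ((1 - α * (1 - x)) * γbar)) * Real.exp (-x)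
      = (1 / (α * γbar)) * Real.exp ((1 - α) / α) *
          genGamma 0 ((1 - α) / α) (γ / (α * γbar)) :=
  rdr_pdf_general γbar α γ hα0
end

section
/- (Double-Rayleigh plus LOS CDF) Let γ̄ > 0 and 0 < β < 1, and let f(t) denote the DRLOS density, equal to (2/((1-β)γ̄)) I₀(2√(t/((1-β)γ̄))) K₀(2√(β/(1-β))) for 0 < t < βγ̄ and (2/((1-β)γ̄)) K₀(2√(t/((1-β)γ̄))) I₀(2√(β/(1-β))) for t > βγ̄. Then for 0 < γ < βγ̄: ∫₀^γ f(t) dt = (2/√(1-β)) K₀(2√(β/(1-β))) √(γ/γ̄) I₁(2√(γ/((1-β)γ̄))); and for γ > βγ̄: ∫₀^γ f(t) dt = c + (2/√(1-β)) I₀(2√(β/(1-β))) [ √β K₁(2√(β/(1-β))) - √(γ/γ̄) K₁(2√(γ/((1-β)γ̄))) ], where c = 2√(β/(1-β)) K₀(2√(β/(1-β))) I₁(2√(β/(1-β))). -/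
open MeasureTheory Real

/-- Modified Bessel function of the first kind and order zero:
`I₀(z) = ∑_{k=0}^∞ (z²/4)^k / (k!)²`. -/
noncomputable def besselI0 (z : ℝ) : ℝ :=
  ∑' k : ℕ, (z ^ 2 / 4) ^ k / ((Nat.factorial k : ℝ)) ^ 2

/-- Modified Bessel function of the first kind and order one:
`I₁(z) = ∑_{k=0}^∞ (z/2)^{2k+1} / (k! (k+1)!)`. -/
noncomputable def besselI1 (z : ℝ) : ℝ :=
  ∑' k : ℕ, (z / 2) ^ (2 * k + 1) / ((Nat.factorial k : ℝ) * (Nat.factorial (k + 1) : ℝ))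

/-- Modified Bessel function of the second kind and order zero:
`K₀(z) = ∫₀^∞ e^{-z cosh t} dt`. -/
noncomputable def besselK0 (z : ℝ) : ℝ :=
  ∫ t in Set.Ioi (0 : ℝ), Real.exp (-z * Real.cosh t)

/-- Modified Bessel function of the second kind and order one:
`K₁(z) = ∫₀^∞ e^{-z cosh t} cosh t dt`. -/
noncomputable def besselK1 (z : ℝ) : ℝ :=
  ∫ t in Set.Ioi (0 : ℝ), Real.exp (-z * Real.cosh t) * Real.cosh t

/-!
With `a = (1 - β) γ̄`, the substitution `z = 2 √(t / a)` turns `(2 / a) g(2 √(t / a)) dt` into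
`z g(z) dz`, so both regimes reduce to `(z I₁(z))' = z I₀(z)` and `(z K₁(z))' = -z K₀(z)`, and the
threshold `t = βγ̄` corresponds to `z = 2 √(β / (1 - β))`. The first identity is integrated term by
term from the power series. For the second, Fubini applied to the integral representation of `K₀`
leaves `∫₀^∞ (z / cosh s + 1 / cosh² s) e^{-z cosh s} ds`, which equals `z K₁(z)` by an integration
by parts.
-/
open Set Filter Topology
open scoped Nat

lemma mul_exp_neg_mul_le {z : ℝ} (hz : 0 < z) (u : ℝ) :
    u * exp (-z * u) ≤ 2 / z * exp (-(z / 2) * u) := by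
  have h : z / 2 * u ≤ exp (z / 2 * u) := by linarith [add_one_le_exp (z / 2 * u)]
  calc u * exp (-z * u) = 2 / z * (z / 2 * u) * exp (-z * u) := by field_simp
    _ ≤ 2 / z * exp (z / 2 * u) * exp (-z * u) := by gcongr
    _ = 2 / z * exp (-(z / 2) * u) := by rw [mul_assoc, ← exp_add]; ring_nf

lemma integrableOn_exp_neg_mul_cosh {z : ℝ} (hz : 0 < z) :
    IntegrableOn (fun s => exp (-z * cosh s)) (Ioi 0) := by
  refine (exp_neg_integrableOn_Ioi 0 hz).mono' (by fun_prop : Continuous _).aestronglyMeasurable ?_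
  filter_upwards [ae_restrict_mem measurableSet_Ioi] with s hs
  rw [norm_of_nonneg (exp_pos _).le, exp_le_exp, neg_mul, neg_mul, neg_le_neg_iff]
  exact mul_le_mul_of_nonneg_left ((self_le_sinh_iff.2 hs.le).trans (sinh_lt_cosh s).le) hz.le

lemma integrableOn_exp_neg_mul_cosh_mul_cosh {z : ℝ} (hz : 0 < z) :
    IntegrableOn (fun s => exp (-z * cosh s) * cosh s) (Ioi 0) := by
  refine ((integrableOn_exp_neg_mul_cosh (half_pos hz)).const_mul (2 / z)).mono'
    (by fun_prop : Continuous _).aestronglyMeasurable (ae_of_all _ fun s => ?_)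
  rw [norm_of_nonneg (by positivity), mul_comm]
  exact mul_exp_neg_mul_le hz _

lemma integrableOn_div_cosh_add_inv_cosh_sq_mul_exp {z : ℝ} (hz : 0 < z) :
    IntegrableOn (fun s => (z / cosh s + 1 / cosh s ^ 2) * exp (-z * cosh s)) (Ioi 0) := by
  refine ((integrableOn_exp_neg_mul_cosh hz).const_mul (z + 1)).mono'
    (by fun_prop : Measurable _).aestronglyMeasurable (ae_of_all _ fun s => ?_)
  have h1 : 1 ≤ cosh s := one_le_cosh s
  rw [norm_of_nonneg (by positivity)]
  gcongr
  · exact div_le_self hz.le h1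
  · rw [div_le_one (by positivity)]; nlinarith

lemma tendsto_exp_neg_mul_cosh_atTop {z : ℝ} (hz : 0 < z) :
    Tendsto (fun s => exp (-z * cosh s)) atTop (𝓝 0) := by
  refine tendsto_exp_atBot.comp (tendsto_atTop_mono' _ ?_ tendsto_id |>.const_mul_atTop_of_neg
    (neg_neg_of_pos hz))
  filter_upwards [eventually_ge_atTop 0] with s hs
  exact (self_le_sinh_iff.2 hs).trans (sinh_lt_cosh s).le

/-- Integration by parts against `d/ds (tanh s · e^{-z cosh s})`. -/
lemma mul_besselK1_eq_integral {z : ℝ} (hz : 0 < z) :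
    z * besselK1 z = ∫ s in Ioi 0, (z / cosh s + 1 / cosh s ^ 2) * exp (-z * cosh s) := by
  have hderiv : ∀ s ∈ Ici (0 : ℝ), HasDerivAt (fun s => sinh s / cosh s * exp (-z * cosh s))
      ((z / cosh s + 1 / cosh s ^ 2) * exp (-z * cosh s) - z * (exp (-z * cosh s) * cosh s)) s := by
    intro s _
    have hc := (cosh_pos s).ne'
    refine (((hasDerivAt_sinh s).div (hasDerivAt_cosh s) hc).mul
      ((hasDerivAt_cosh s).const_mul (-z)).exp).congr_deriv ?_
    rw [Pi.div_apply]
    field_simp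
    linear_combination (1 + cosh s * z) * cosh_sq_sub_sinh_sq s
  have hlim : Tendsto (fun s => sinh s / cosh s * exp (-z * cosh s)) atTop (𝓝 0) := by
    refine squeeze_zero_norm (fun s => ?_) (tendsto_exp_neg_mul_cosh_atTop hz)
    rw [norm_mul, norm_of_nonneg (exp_pos _).le, ← tanh_eq_sinh_div_cosh, norm_eq_abs]
    exact mul_le_of_le_one_left (exp_pos _).le (abs_tanh_lt_one s).le
  have hint := integrableOn_div_cosh_add_inv_cosh_sq_mul_exp hz
  have hint' := (integrableOn_exp_neg_mul_cosh_mul_cosh hz).const_mul z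
  have h := integral_Ioi_of_hasDerivAt_of_tendsto' hderiv (hint.sub hint') hlim
  rw [integral_sub hint hint', integral_const_mul] at h
  simp only [sinh_zero, zero_div, zero_mul, sub_zero] at h
  rw [besselK1]
  linarith

lemma integral_mul_exp_neg_mul {c : ℝ} (hc : c ≠ 0) (z₁ z₂ : ℝ) :
    ∫ z in z₁..z₂, z * exp (-z * c)
      = (z₁ / c + 1 / c ^ 2) * exp (-z₁ * c) - (z₂ / c + 1 / c ^ 2) * exp (-z₂ * c) := by
  have hderiv : ∀ z ∈ uIcc z₁ z₂,
      HasDerivAt (fun z => -((z / c + 1 / c ^ 2) * exp (-z * c))) (z * exp (-z * c)) z := by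
    intro z _
    refine ((((hasDerivAt_id z).div_const c).add_const _).mul
      (((hasDerivAt_id z).neg.mul_const c).exp)).neg.congr_deriv ?_
    simp only [Pi.neg_apply, id_eq]
    field_simp
    ring
  rw [intervalIntegral.integral_eq_sub_of_hasDerivAt hderiv
    ((by fun_prop : Continuous _).intervalIntegrable _ _)]
  ring

lemma integral_mul_besselK0 {z₁ z₂ : ℝ} (hz₁ : 0 < z₁) (h : z₁ ≤ z₂) :
    ∫ z in z₁..z₂, z * besselK0 z = z₁ * besselK1 z₁ - z₂ * besselK1 z₂ := by
  have hint : Integrable (Function.uncurry fun z s => z * exp (-z * cosh s))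
      ((volume.restrict (Ioc z₁ z₂)).prod (volume.restrict (Ioi 0))) := by
    have hbound := (integrableOn_const (μ := volume) (s := Ioc z₁ z₂) (C := z₂)
      measure_Ioc_lt_top.ne).mul_prod (integrableOn_exp_neg_mul_cosh hz₁)
    refine hbound.mono' (by fun_prop : Continuous _).aestronglyMeasurable ?_
    rw [Measure.prod_restrict]
    filter_upwards [ae_restrict_mem (measurableSet_Ioc.prod measurableSet_Ioi)] with p hp
    obtain ⟨⟨hp₁, hp₂⟩, -⟩ := hp
    have hp₀ : 0 < p.1 := hz₁.trans hp₁
    rw [Function.uncurry_apply_pair, norm_of_nonneg (by positivity)]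
    gcongr
    linarith
  have hswap : ∫ z in z₁..z₂, z * besselK0 z
      = ∫ s in Ioi 0, ∫ z in z₁..z₂, z * exp (-z * cosh s) := by
    simp only [besselK0, ← integral_const_mul, intervalIntegral.integral_of_le h]
    exact integral_integral_swap hint
  rw [hswap, setIntegral_congr_fun measurableSet_Ioi
      (fun s _ => integral_mul_exp_neg_mul (cosh_pos s).ne' z₁ z₂),
    integral_sub (integrableOn_div_cosh_add_inv_cosh_sq_mul_exp hz₁)
      (integrableOn_div_cosh_add_inv_cosh_sq_mul_exp (hz₁.trans_le h)),
    mul_besselK1_eq_integral hz₁, mul_besselK1_eq_integral (hz₁.trans_le h)]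

lemma summable_pow_div_factorial_sq (y : ℝ) : Summable fun k : ℕ => y ^ k / (k ! : ℝ) ^ 2 := by
  refine (Real.summable_pow_div_factorial |y|).of_norm_bounded fun k => ?_
  have hk : (1 : ℝ) ≤ k ! := by exact_mod_cast k.factorial_pos
  rw [norm_div, norm_pow, norm_pow, norm_eq_abs, Real.norm_natCast]
  gcongr
  nlinarith

lemma besselI0_monotoneOn : MonotoneOn besselI0 (Ici 0) := by
  intro x hx y _ hxy
  rw [mem_Ici] at hx
  exact (summable_pow_div_factorial_sq _).tsum_le_tsum (fun k => by gcongr)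
    (summable_pow_div_factorial_sq _)

lemma besselK0_antitoneOn : AntitoneOn besselK0 (Ioi 0) := by
  intro x hx y hy hxy
  refine setIntegral_mono_on (integrableOn_exp_neg_mul_cosh hy) (integrableOn_exp_neg_mul_cosh hx)
    measurableSet_Ioi fun s _ => ?_
  have hc := cosh_pos s
  gcongr

lemma integral_mul_besselI0 (Z : ℝ) : ∫ z in 0..Z, z * besselI0 z = Z * besselI1 Z := by
  set F : ℕ → ℝ → ℝ := fun k z => z * ((z ^ 2 / 4) ^ k / (k ! : ℝ) ^ 2)
  have hF : ∀ k, ∫ z in 0..Z, F k z = Z * ((Z / 2) ^ (2 * k + 1) / (k ! * (k + 1)! : ℝ)) := by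
    intro k
    have hFk : F k = fun z => z ^ (2 * k + 1) / (4 ^ k * (k ! : ℝ) ^ 2) := by
      funext z; simp only [F, div_pow]; field_simp; ring
    have h2 : (2 : ℝ) ^ (2 * k + 1) = 2 * 4 ^ k := by rw [pow_succ, pow_mul]; norm_num; ring
    rw [hFk, intervalIntegral.integral_div, integral_pow, Nat.factorial_succ, div_pow, h2]
    push_cast
    field_simp
    ring
  have hsum : HasSum (fun k => ∫ z in 0..Z, F k z) (∫ z in 0..Z, z * besselI0 z) := by
    refine intervalIntegral.hasSum_integral_of_dominated_convergence
      (fun k _ => |Z| * ((Z ^ 2 / 4) ^ k / (k ! : ℝ) ^ 2))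
      (fun k => (by fun_prop : Continuous (F k)).aestronglyMeasurable)
      (fun k => ae_of_all _ fun z hz => ?_)
      (ae_of_all _ fun _ _ => (summable_pow_div_factorial_sq _).mul_left _)
      intervalIntegrable_const
      (ae_of_all _ fun z _ => (summable_pow_div_factorial_sq _).hasSum.mul_left z)
    have hzZ : |z| ≤ |Z| := by
      simpa using abs_sub_left_of_mem_uIcc (uIoc_subset_uIcc hz)
    rw [norm_mul, norm_eq_abs, norm_of_nonneg (by positivity)]
    have hz2 : z ^ 2 ≤ Z ^ 2 := sq_le_sq.2 hzZ
    gcongr ?_ * ((?_ / 4) ^ k / _)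
  rw [besselI1, ← tsum_mul_left, ← hsum.tsum_eq]
  exact tsum_congr hF

lemma integral_comp_two_mul_sqrt_div (g : ℝ → ℝ) {a t₁ t₂ : ℝ} (ha : 0 < a) (h₁ : 0 ≤ t₁)
    (h₂ : 0 ≤ t₂) :
    ∫ t in t₁..t₂, 2 / a * g (2 * √(t / a)) = ∫ z in 2 * √(t₁ / a)..2 * √(t₂ / a), z * g z := by
  have hinv : ∀ t, 0 ≤ t → a * (2 * √(t / a)) ^ 2 / 4 = t := fun t ht => by
    rw [mul_pow, sq_sqrt (div_nonneg ht ha.le)]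
    field_simp
    ring
  have hsubst := intervalIntegral.integral_comp_mul_deriv_of_deriv_nonneg
    (a := 2 * √(t₁ / a)) (b := 2 * √(t₂ / a)) (f := fun z => a * z ^ 2 / 4)
    (f' := fun z => a * z / 2) (g := fun t => 2 / a * g (2 * √(t / a))) (by fun_prop)
    (fun z _ => ((hasDerivAt_pow 2 z).const_mul a).div_const 4 |>.congr_deriv (by ring))
    (fun z hz => by
      have hz₀ : 0 < z := lt_of_le_of_lt (by positivity) hz.1
      positivity)
  simp only [hinv t₁ h₁, hinv t₂ h₂] at hsubst
  rw [← hsubst]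
  refine intervalIntegral.integral_congr fun z hz => ?_
  have hz : 0 ≤ z := le_trans (by positivity) hz.1
  rw [Function.comp_apply, show a * z ^ 2 / 4 / a = (z / 2) ^ 2 by field_simp; ring,
    sqrt_sq (by positivity)]
  field_simp

lemma integral_besselI0_two_mul_sqrt_div {a γ : ℝ} (ha : 0 < a) (hγ : 0 ≤ γ) :
    ∫ t in 0..γ, 2 / a * besselI0 (2 * √(t / a))
      = 2 * √(γ / a) * besselI1 (2 * √(γ / a)) := by
  rw [integral_comp_two_mul_sqrt_div _ ha le_rfl hγ, zero_div, sqrt_zero, mul_zero,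
    integral_mul_besselI0]

lemma integral_besselK0_two_mul_sqrt_div {a t₁ t₂ : ℝ} (ha : 0 < a) (h₁ : 0 < t₁) (h : t₁ ≤ t₂) :
    ∫ t in t₁..t₂, 2 / a * besselK0 (2 * √(t / a))
      = 2 * √(t₁ / a) * besselK1 (2 * √(t₁ / a)) - 2 * √(t₂ / a) * besselK1 (2 * √(t₂ / a)) := by
  rw [integral_comp_two_mul_sqrt_div _ ha h₁.le (h₁.le.trans h)]
  exact integral_mul_besselK0 (by positivity) (by gcongr)

lemma intervalIntegrable_besselI0_two_mul_sqrt_div {a : ℝ} (ha : 0 ≤ a) (t₁ t₂ : ℝ) :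
    IntervalIntegrable (fun t => besselI0 (2 * √(t / a))) volume t₁ t₂ :=
  Monotone.intervalIntegrable fun _ _ hst =>
    besselI0_monotoneOn (mem_Ici.2 (by positivity)) (mem_Ici.2 (by positivity)) (by gcongr)

lemma intervalIntegrable_besselK0_two_mul_sqrt_div {a t₁ t₂ : ℝ} (ha : 0 < a) (h₁ : 0 < t₁)
    (h₂ : 0 < t₂) : IntervalIntegrable (fun t => besselK0 (2 * √(t / a))) volume t₁ t₂ := by
  refine AntitoneOn.intervalIntegrable fun s hs t ht hst => besselK0_antitoneOn ?_ ?_ (by gcongr)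
  · have : 0 < s := lt_of_lt_of_le (lt_min h₁ h₂) hs.1
    exact mem_Ioi.2 (by positivity)
  · have : 0 < t := lt_of_lt_of_le (lt_min h₁ h₂) ht.1
    exact mem_Ioi.2 (by positivity)

lemma integral_of_besselI0_below_of_besselK0_above {a b γ A B : ℝ} {f : ℝ → ℝ} (ha : 0 < a)
    (hb : 0 < b) (hbγ : b < γ)
    (hf₁ : ∀ t < b, f t = 2 / a * besselI0 (2 * √(t / a)) * A)
    (hf₂ : ∀ t, b ≤ t → f t = 2 / a * besselK0 (2 * √(t / a)) * B) :
    ∫ t in 0..γ, f t = 2 * √(b / a) * besselI1 (2 * √(b / a)) * A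
      + (2 * √(b / a) * besselK1 (2 * √(b / a)) - 2 * √(γ / a) * besselK1 (2 * √(γ / a))) * B := by
  have hEq₁ : EqOn (fun t => 2 / a * besselI0 (2 * √(t / a)) * A) f (uIoo 0 b) :=
    fun t ht => (hf₁ t (uIoo_of_le hb.le ▸ ht).2).symm
  have hEq₂ : EqOn (fun t => 2 / a * besselK0 (2 * √(t / a)) * B) f (uIcc b γ) :=
    fun t ht => (hf₂ t (uIcc_of_le hbγ.le ▸ ht).1).symm
  have hint₁ : IntervalIntegrable f volume 0 b :=
    (((intervalIntegrable_besselI0_two_mul_sqrt_div ha.le 0 b).const_mul (2 / a)).mul_const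
      A).congr_uIoo hEq₁
  have hint₂ : IntervalIntegrable f volume b γ :=
    (((intervalIntegrable_besselK0_two_mul_sqrt_div ha hb (hb.trans hbγ)).const_mul
      (2 / a)).mul_const B).congr_uIoo fun t ht => hEq₂ (uIoo_subset_uIcc_self ht)
  rw [← intervalIntegral.integral_add_adjacent_intervals hint₁ hint₂,
    ← intervalIntegral.integral_congr_uIoo hEq₁, ← intervalIntegral.integral_congr hEq₂,
    intervalIntegral.integral_mul_const, intervalIntegral.integral_mul_const,
    integral_besselI0_two_mul_sqrt_div ha hb.le, integral_besselK0_two_mul_sqrt_div ha hb hbγ.le]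

/-- **Double-Rayleigh plus LOS CDF.** Integrating the piecewise DRLOS density up to `γ`
yields the stated closed forms in the two regimes `0 < γ < βγ̄` and `γ > βγ̄`. -/
theorem drlos_cdf (γbar β : ℝ) (hγbar : 0 < γbar) (hβ0 : 0 < β) (hβ1 : β < 1)
    (f : ℝ → ℝ)
    (hf : ∀ t : ℝ, f t =
      if t < β * γbar then
        (2 / ((1 - β) * γbar)) * besselI0 (2 * Real.sqrt (t / ((1 - β) * γbar))) *
          besselK0 (2 * Real.sqrt (β / (1 - β)))
      else
        (2 / ((1 - β) * γbar)) * besselK0 (2 * Real.sqrt (t / ((1 - β) * γbar))) *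
          besselI0 (2 * Real.sqrt (β / (1 - β)))) :
    (∀ γ : ℝ, 0 < γ → γ < β * γbar →
      ∫ t in (0 : ℝ)..γ, f t
        = (2 / Real.sqrt (1 - β)) * besselK0 (2 * Real.sqrt (β / (1 - β))) *
            Real.sqrt (γ / γbar) * besselI1 (2 * Real.sqrt (γ / ((1 - β) * γbar)))) ∧
    (∀ γ : ℝ, β * γbar < γ →
      ∫ t in (0 : ℝ)..γ, f t
        = (2 * Real.sqrt (β / (1 - β)) * besselK0 (2 * Real.sqrt (β / (1 - β))) *
            besselI1 (2 * Real.sqrt (β / (1 - β)))) +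
          (2 / Real.sqrt (1 - β)) * besselI0 (2 * Real.sqrt (β / (1 - β))) *
            (Real.sqrt β * besselK1 (2 * Real.sqrt (β / (1 - β))) -
              Real.sqrt (γ / γbar) * besselK1 (2 * Real.sqrt (γ / ((1 - β) * γbar))))) := by
  have h1β : 0 < 1 - β := by linarith
  set a := (1 - β) * γbar with ha_def
  set b := β * γbar with hb_def
  set c := 2 * √(β / (1 - β)) with hc_def
  have ha : 0 < a := mul_pos h1β hγbar
  have hb : 0 < b := mul_pos hβ0 hγbar
  have hbc : 2 * √(b / a) = c := by
    rw [hc_def, ha_def, hb_def, mul_div_mul_right _ _ hγbar.ne']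
  have hsqrt : ∀ x, 2 / √(1 - β) * √(x / γbar) = 2 * √(x / a) := fun x => by
    rw [show x / a = x / γbar / (1 - β) by rw [ha_def, div_div, mul_comm], sqrt_div' _ h1β.le]
    ring
  have hβc : 2 / √(1 - β) * √β = c := by
    rw [hc_def, sqrt_div' _ h1β.le]
    ring
  have hf₁ : ∀ t < b, f t = 2 / a * besselI0 (2 * √(t / a)) * besselK0 c := fun t ht => by
    rw [hf, if_pos ht]
  have hf₂ : ∀ t, b ≤ t → f t = 2 / a * besselK0 (2 * √(t / a)) * besselI0 c := fun t ht => by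
    rw [hf, if_neg (not_lt.2 ht)]
  refine ⟨fun γ hγ hγb => ?_, fun γ hbγ => ?_⟩
  · rw [intervalIntegral.integral_congr fun t ht => hf₁ t ?_, intervalIntegral.integral_mul_const,
      integral_besselI0_two_mul_sqrt_div ha hγ.le, ← hsqrt]
    · ring
    · exact ((uIcc_of_le hγ.le ▸ ht).2).trans_lt hγb
  · rw [integral_of_besselI0_below_of_besselK0_above ha hb hbγ hf₁ hf₂, hbc, ← hsqrt, ← hβc]
    ring
end
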